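/- arXiv:2201.12320 — 6 statements merged into one kernel-verified Lean document; each statement's English description precedes it below -/
import Mathlib

section
/- Let 𝒴 be a finite nonempty set, let p_d be a probability distribution on 𝒴 with p_d(y) > 0 for all y, and let p_0 be a probability distribution on 𝒴 with p_0(y) > 0 for all y. Define recursively, for t ≥ 1, p̃_t(y) = p_d(y)·p_{t-1}(y)/(p_d(y)+p_{t-1}(y)), z_t = Σ_{y∈𝒴} p̃_t(y), and p_t(y) = p̃_t(y)/z_t (so that p_t is the normalization of p_{t-1}·D_t where D_t(y) = p_d(y)/(p_d(y)+p_{t-1}(y)) is the optimal discriminator between p_d and p_{t-1}). Then p_t converges pointwise (equivalently, in distribution on the finite set 𝒴) to p_d as t → ∞. -/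
open Filter Finset

private lemma fmono_aux {a b : ℝ} (ha : 0 ≤ a) (hab : a ≤ b) :
    a / (1 + a) ≤ b / (1 + b) := by
  have hb : 0 ≤ b := ha.trans hab
  rw [div_le_div_iff₀ (by linarith) (by linarith)]
  nlinarith

/-- Theorem 1 of the paper: with optimal discriminators
`D_t(y) = p_d(y)/(p_d(y)+p_{t-1}(y))` and optimal generator updates
`p_t ∝ p_{t-1}·D_t` (i.e. `p_t(y) = p̃_t(y)/z_t` with
`p̃_t(y) = p_d(y)p_{t-1}(y)/(p_d(y)+p_{t-1}(y))` and `z_t = ∑_y p̃_t(y)`),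
starting from a positive `p_0`, the generator `p_t` converges pointwise
(equivalently, in distribution on the finite set `𝒴`) to `p_d`. -/
theorem gcn_convergence {Y : Type*} [Fintype Y] [Nonempty Y]
    (pd : Y → ℝ) (hpd_pos : ∀ y, 0 < pd y) (hpd_sum : ∑ y, pd y = 1)
    (p : ℕ → Y → ℝ) (ptil : ℕ → Y → ℝ) (z : ℕ → ℝ)
    (hp0_pos : ∀ y, 0 < p 0 y) (hp0_sum : ∑ y, p 0 y = 1)
    (hptil : ∀ (t : ℕ) (y : Y), ptil (t + 1) y = pd y * p t y / (pd y + p t y))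
    (hz : ∀ t : ℕ, z (t + 1) = ∑ y, ptil (t + 1) y)
    (hp : ∀ (t : ℕ) (y : Y), p (t + 1) y = ptil (t + 1) y / z (t + 1)) :
    ∀ y, Tendsto (fun t => p t y) atTop (nhds (pd y)) := by
  -- positivity of p
  have hpos : ∀ t y, 0 < p t y := by
    intro t
    induction t with
    | zero => exact hp0_pos
    | succ t ih =>
      have hztil : ∀ y, 0 < ptil (t+1) y := fun y => by
        rw [hptil]
        exact div_pos (mul_pos (hpd_pos y) (ih y)) (add_pos (hpd_pos y) (ih y))
      have hzpos : 0 < z (t+1) := by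
        rw [hz]; exact Finset.sum_pos (fun y _ => hztil y) univ_nonempty
      intro y
      rw [hp]
      exact div_pos (hztil y) hzpos
  have hzpos : ∀ t, 0 < z (t+1) := by
    intro t
    rw [hz]
    exact Finset.sum_pos (fun y _ => by
      rw [hptil]
      exact div_pos (mul_pos (hpd_pos y) (hpos t y)) (add_pos (hpd_pos y) (hpos t y)))
      univ_nonempty
  -- p sums to 1
  have hsum : ∀ t, ∑ y, p t y = 1 := by
    intro t
    cases t with
    | zero => exact hp0_sum
    | succ t =>
      have : ∑ y, p (t+1) y = (∑ y, ptil (t+1) y) / z (t+1) := by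
        rw [Finset.sum_div]; exact Finset.sum_congr rfl fun y _ => hp t y
      rw [this, ← hz, div_self (hzpos t).ne']
  -- ratio
  set r : ℕ → Y → ℝ := fun t y => p t y / pd y with hr
  have hrpos : ∀ t y, 0 < r t y := fun t y => div_pos (hpos t y) (hpd_pos y)
  set M : ℕ → ℝ := fun t => Finset.univ.sup' univ_nonempty (r t) with hMdef
  set m : ℕ → ℝ := fun t => Finset.univ.inf' univ_nonempty (r t) with hmdef
  have hM : ∀ t y, r t y ≤ M t := fun t y => Finset.le_sup' (r t) (mem_univ y)
  have hm : ∀ t y, m t ≤ r t y := fun t y => Finset.inf'_le (r t) (mem_univ y)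
  have hmpos : ∀ t, 0 < m t := by
    intro t
    obtain ⟨y, -, hy⟩ := Finset.exists_mem_eq_inf' univ_nonempty (r t)
    have hy' : m t = r t y := hy
    rw [hy']; exact hrpos t y
  have hmM : ∀ t, m t ≤ M t := fun t =>
    (hm t (Classical.arbitrary Y)).trans (hM t (Classical.arbitrary Y))
  have hMpos : ∀ t, 0 < M t := fun t => (hmpos t).trans_le (hmM t)
  -- m ≤ 1 ≤ M since both p t and pd sum to 1
  have hm1 : ∀ t, m t ≤ 1 := by
    intro t
    by_contra h
    push_neg at h
    have hlt : ∀ y ∈ (univ : Finset Y), pd y < p t y := by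
      intro y _
      have h1 : 1 < p t y / pd y := h.trans_le (hm t y)
      exact (one_lt_div (hpd_pos y)).mp h1
    have := Finset.sum_lt_sum_of_nonempty univ_nonempty hlt
    rw [hpd_sum, hsum t] at this
    exact lt_irrefl _ this
  have hM1 : ∀ t, 1 ≤ M t := by
    intro t
    by_contra h
    push_neg at h
    have hlt : ∀ y ∈ (univ : Finset Y), p t y < pd y := by
      intro y _
      have h1 : p t y / pd y < 1 := (hM t y).trans_lt h
      exact (div_lt_one (hpd_pos y)).mp h1
    have := Finset.sum_lt_sum_of_nonempty univ_nonempty hlt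
    rw [hpd_sum, hsum t] at this
    exact lt_irrefl _ this
  -- recurrence for r
  have hrrec : ∀ t y, r (t+1) y = (r t y / (1 + r t y)) / z (t+1) := by
    intro t y
    have h1 : pd y ≠ 0 := (hpd_pos y).ne'
    have h2 : pd y + p t y ≠ 0 := (add_pos (hpd_pos y) (hpos t y)).ne'
    have h3 : z (t+1) ≠ 0 := (hzpos t).ne'
    have h4 : 1 + p t y / pd y ≠ 0 := ne_of_gt (by have := div_pos (hpos t y) (hpd_pos y); linarith)
    show p (t+1) y / pd y = (p t y / pd y / (1 + p t y / pd y)) / z (t+1)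
    rw [hp, hptil]
    field_simp
  -- recurrences for M and m
  have hMrec : ∀ t, M (t+1) = (M t / (1 + M t)) / z (t+1) := by
    intro t
    apply le_antisymm
    · apply Finset.sup'_le
      intro y _
      rw [hrrec t y]
      exact (div_le_div_iff_of_pos_right (hzpos t)).mpr (fmono_aux (hrpos t y).le (hM t y))
    · obtain ⟨y0, -, hy0⟩ := Finset.exists_mem_eq_sup' univ_nonempty (r t)
      have hy0' : M t = r t y0 := hy0
      have heq : M t / (1 + M t) / z (t+1) = r (t+1) y0 := by
        rw [hrrec t y0, hy0']
      rw [heq]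
      exact hM (t+1) y0
  have hmrec : ∀ t, m (t+1) = (m t / (1 + m t)) / z (t+1) := by
    intro t
    apply le_antisymm
    · obtain ⟨y0, -, hy0⟩ := Finset.exists_mem_eq_inf' univ_nonempty (r t)
      have hy0' : m t = r t y0 := hy0
      have heq : m t / (1 + m t) / z (t+1) = r (t+1) y0 := by
        rw [hrrec t y0, hy0']
      rw [heq]
      exact hm (t+1) y0
    · apply Finset.le_inf'
      intro y _
      rw [hrrec t y]
      exact (div_le_div_iff_of_pos_right (hzpos t)).mpr (fmono_aux (hmpos t).le (hm t y))
  -- the contraction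
  have hdrec : ∀ t, M (t+1) / m (t+1) - 1 ≤ (M t / m t - 1) / 2 := by
    intro t
    have hmt := hmpos t
    have hMt := hMpos t
    have hM1t := hM1 t
    have hz' := hzpos t
    have e1 : M (t+1) / m (t+1) - 1 = (M t - m t) / ((1 + M t) * m t) := by
      rw [hMrec, hmrec]
      field_simp
      ring
    have e2 : (M t / m t - 1) / 2 = (M t - m t) / (2 * m t) := by
      rw [div_sub_one hmt.ne', div_div, mul_comm]
    rw [e1, e2]
    gcongr
    · nlinarith [hmM t]
    · linarith
  have hd0 : ∀ t, 0 ≤ M t / m t - 1 := by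
    intro t
    have := (one_le_div (hmpos t)).mpr (hmM t)
    linarith
  -- geometric decay
  have hgeo : ∀ t, M t / m t - 1 ≤ (M 0 / m 0 - 1) * (1/2)^t := by
    intro t
    induction t with
    | zero => simp
    | succ t ih =>
      calc M (t+1) / m (t+1) - 1 ≤ (M t / m t - 1) / 2 := hdrec t
        _ ≤ ((M 0 / m 0 - 1) * (1/2)^t) / 2 := by linarith
        _ = (M 0 / m 0 - 1) * (1/2)^(t+1) := by ring
  have htend0 : Tendsto (fun t => M t / m t - 1) atTop (nhds 0) := by
    apply squeeze_zero hd0 hgeo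
    have h2 : Tendsto (fun t : ℕ => (1/2 : ℝ)^t) atTop (nhds 0) :=
      tendsto_pow_atTop_nhds_zero_of_lt_one (by norm_num) (by norm_num)
    simpa using h2.const_mul (M 0 / m 0 - 1)
  have htend1 : Tendsto (fun t => M t / m t) atTop (nhds 1) := by
    have := htend0.add_const 1
    simpa using this
  have htendinv : Tendsto (fun t => (M t / m t)⁻¹) atTop (nhds 1) := by
    have := htend1.inv₀ (by norm_num)
    simpa using this
  -- pointwise squeeze for r
  have hub : ∀ t y, r t y ≤ M t / m t := by
    intro t y
    refine (hM t y).trans ?_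
    rw [le_div_iff₀ (hmpos t)]
    nlinarith [hm1 t, hMpos t]
  have hlb : ∀ t y, (M t / m t)⁻¹ ≤ r t y := by
    intro t y
    refine le_trans ?_ (hm t y)
    rw [inv_div, div_le_iff₀ (hMpos t)]
    nlinarith [hM1 t, hmpos t]
  have hrtend : ∀ y, Tendsto (fun t => r t y) atTop (nhds 1) := by
    intro y
    exact tendsto_of_tendsto_of_tendsto_of_le_of_le htendinv htend1
      (fun t => hlb t y) (fun t => hub t y)
  intro y
  have h := (hrtend y).mul_const (pd y)
  rw [one_mul] at h
  refine h.congr fun t => ?_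
  show r t y * pd y = p t y
  rw [hr]
  exact div_mul_cancel₀ _ (hpd_pos y).ne'
end

section
/- Let 𝒴 be a finite nonempty set, p_d and p_{t-1} probability distributions on 𝒴 with p_{t-1}(y) > 0 for all y, and D_t : 𝒴 → (0,1) a discriminator. Define p_t(y) = p_{t-1}(y)·D_t(y) / Σ_{y'} p_{t-1}(y')·D_t(y'). Suppose there exists η ∈ (1/2, 1) with log η ≤ E_{y∼p_d}[log D_t(y)] and log η ≤ E_{y∼p_{t-1}}[log(1 − D_t(y))]. Then Δ_t := KL(p_d ‖ p_t) − KL(p_d ‖ p_{t-1}) satisfies Δ_t ≤ log(1/η − 1) < 0. -/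
open Finset

/-- Theorem 2 of the paper: if `p_t ∝ p_{t-1}·D_t` and the discriminator is
sufficiently trained, i.e. `log η ≤ E_{p_d}[log D_t]` and
`log η ≤ E_{p_{t-1}}[log(1-D_t)]` for some `η ∈ (1/2, 1)`, then
`Δ_t = KL(p_d‖p_t) − KL(p_d‖p_{t-1}) ≤ log(1/η − 1) < 0`. -/
theorem gcn_kl_decrease {Y : Type*} [Fintype Y] [Nonempty Y]
    (pd pprev : Y → ℝ)
    (hpd_nonneg : ∀ y, 0 ≤ pd y) (hpd_sum : ∑ y, pd y = 1)
    (hpprev_pos : ∀ y, 0 < pprev y) (hpprev_sum : ∑ y, pprev y = 1)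
    (D : Y → ℝ) (hD : ∀ y, D y ∈ Set.Ioo (0 : ℝ) 1)
    (pt : Y → ℝ) (hpt : ∀ y, pt y = pprev y * D y / ∑ y', pprev y' * D y')
    (η : ℝ) (hη : η ∈ Set.Ioo (1 / 2 : ℝ) 1)
    (h1 : Real.log η ≤ ∑ y, pd y * Real.log (D y))
    (h2 : Real.log η ≤ ∑ y, pprev y * Real.log (1 - D y)) :
    (∑ y, pd y * Real.log (pd y / pt y)) - (∑ y, pd y * Real.log (pd y / pprev y))
      ≤ Real.log (1 / η - 1) ∧ Real.log (1 / η - 1) < 0 := by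
  obtain ⟨hη1, hη2⟩ := hη
  have hη0 : (0 : ℝ) < η := lt_trans (by norm_num) hη1
  set S : ℝ := ∑ y', pprev y' * D y' with hS
  have hSpos : 0 < S :=
    Finset.sum_pos (fun y _ => mul_pos (hpprev_pos y) (hD y).1) univ_nonempty
  -- Jensen: Σ pprev log(1-D) ≤ log (Σ pprev (1-D)) = log (1 - S)
  have hsum1S : ∑ y, pprev y * (1 - D y) = 1 - S := by
    simp [mul_sub, Finset.sum_sub_distrib, hpprev_sum, hS]
  have h1Spos : 0 < 1 - S := by
    rw [← hsum1S]
    exact Finset.sum_pos (fun y _ => mul_pos (hpprev_pos y) (by linarith [(hD y).2]))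
      univ_nonempty
  have hjensen : ∑ y, pprev y * Real.log (1 - D y) ≤ Real.log (1 - S) := by
    have := ((strictConcaveOn_log_Ioi.concaveOn)).le_map_sum
      (t := Finset.univ) (w := pprev) (p := fun y => 1 - D y)
      (fun y _ => (hpprev_pos y).le) hpprev_sum
      (fun y _ => by exact sub_pos.mpr (hD y).2)
    simpa [smul_eq_mul, hsum1S] using this
  have hSle : S ≤ 1 - η := by
    have hlog : Real.log η ≤ Real.log (1 - S) := h2.trans hjensen
    have := (Real.log_le_log_iff hη0 h1Spos).mp hlog
    linarith
  -- rewrite the difference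
  have hkey : (∑ y, pd y * Real.log (pd y / pt y)) - (∑ y, pd y * Real.log (pd y / pprev y))
      = Real.log S - ∑ y, pd y * Real.log (D y) := by
    rw [← Finset.sum_sub_distrib]
    have : ∀ y, pd y * Real.log (pd y / pt y) - pd y * Real.log (pd y / pprev y)
        = pd y * Real.log S - pd y * Real.log (D y) := by
      intro y
      rcases eq_or_lt_of_le (hpd_nonneg y) with h0 | hpos
      · simp [← h0]
      · have hDy := (hD y).1
        have hpy := hpprev_pos y
        have hpty : 0 < pt y := by
          rw [hpt y]; exact div_pos (mul_pos hpy hDy) hSpos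
        rw [← mul_sub, ← mul_sub]
        congr 1
        rw [Real.log_div hpos.ne' hpty.ne', Real.log_div hpos.ne' hpy.ne', hpt y,
          Real.log_div (mul_pos hpy hDy).ne' hSpos.ne', Real.log_mul hpy.ne' hDy.ne']
        ring
    rw [Finset.sum_congr rfl fun y _ => this y, Finset.sum_sub_distrib,
      ← Finset.sum_mul, hpd_sum, one_mul]
  rw [hkey]
  have hlogS : Real.log S ≤ Real.log (1 - η) := Real.log_le_log hSpos hSle
  have heq : Real.log (1 / η - 1) = Real.log (1 - η) - Real.log η := by
    rw [show (1 / η - 1 : ℝ) = (1 - η) / η by field_simp,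
      Real.log_div (by linarith) hη0.ne']
  constructor
  · rw [heq]; linarith
  · apply Real.log_neg
    · rw [sub_pos, lt_div_iff₀ hη0, one_mul]; linarith
    · rw [sub_lt_iff_lt_add, div_lt_iff₀ hη0]; linarith
end

section
/- Let 𝒴 be a finite nonempty set, let p_d and p_0 be probability distributions on 𝒴 with p_d(y) > 0 and p_0(y) > 0 for all y. Define recursively, for t ≥ 1, p̃_t(y) = p_d(y)·p_{t-1}(y)/(p_d(y)+p_{t-1}(y)), z_t = Σ_{y∈𝒴} p̃_t(y), p_t(y) = p̃_t(y)/z_t, and define ẑ_0(y) = p_d(y)/p_0(y) and ẑ_t(y) = z_t·(ẑ_{t-1}(y) + 1) for t ≥ 1. Then for every t ≥ 0 and every y ∈ 𝒴, p̃_{t+1}(y) = p_d(y)/(ẑ_t(y) + 1). -/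
open Finset

/-- Lemma A.1 of the paper: with `p̃_t(y) = p_d(y)p_{t-1}(y)/(p_d(y)+p_{t-1}(y))`,
`z_t = ∑_y p̃_t(y)`, `p_t = p̃_t/z_t`, `ẑ_0(y) = p_d(y)/p_0(y)` and
`ẑ_t(y) = z_t(ẑ_{t-1}(y)+1)` for `t ≥ 1`, we have
`p̃_{t+1}(y) = p_d(y)/(ẑ_t(y)+1)` for every `t ≥ 0` and every `y`. -/
theorem gcn_lemma_A1 {Y : Type*} [Fintype Y] [Nonempty Y]
    (pd : Y → ℝ) (hpd_pos : ∀ y, 0 < pd y) (hpd_sum : ∑ y, pd y = 1)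
    (p : ℕ → Y → ℝ) (ptil : ℕ → Y → ℝ) (z : ℕ → ℝ) (zh : ℕ → Y → ℝ)
    (hp0_pos : ∀ y, 0 < p 0 y) (hp0_sum : ∑ y, p 0 y = 1)
    (hptil : ∀ (t : ℕ) (y : Y), ptil (t + 1) y = pd y * p t y / (pd y + p t y))
    (hz : ∀ t : ℕ, z (t + 1) = ∑ y, ptil (t + 1) y)
    (hp : ∀ (t : ℕ) (y : Y), p (t + 1) y = ptil (t + 1) y / z (t + 1))
    (hzh0 : ∀ y, zh 0 y = pd y / p 0 y)
    (hzh : ∀ (t : ℕ) (y : Y), zh (t + 1) y = z (t + 1) * (zh t y + 1)) :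
    ∀ (t : ℕ) (y : Y), ptil (t + 1) y = pd y / (zh t y + 1) := by
  have key : ∀ t : ℕ, (∀ y, 0 < p t y) ∧ (∀ y, zh t y = pd y / p t y) := by
    intro t
    induction t with
    | zero => exact ⟨hp0_pos, hzh0⟩
    | succ t ih =>
      obtain ⟨hpos, hzeq⟩ := ih
      have hptilpos : ∀ y, 0 < ptil (t + 1) y := by
        intro y
        rw [hptil]
        have h1 := hpd_pos y
        have h2 := hpos y
        positivity
      have hzpos : 0 < z (t + 1) := by
        rw [hz]
        exact Finset.sum_pos (fun y _ => hptilpos y) Finset.univ_nonempty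
      refine ⟨fun y => by rw [hp]; exact div_pos (hptilpos y) hzpos, fun y => ?_⟩
      rw [hzh, hzeq, hp, hptil]
      have h1 := (hpd_pos y).ne'
      have h2 := (hpos y).ne'
      have h3 := (add_pos (hpd_pos y) (hpos y)).ne'
      field_simp
  intro t y
  obtain ⟨hpos, hzeq⟩ := key t
  rw [hptil, hzeq]
  have h1 := (hpd_pos y).ne'
  have h2 := (hpos y).ne'
  have h3 := (add_pos (hpd_pos y) (hpos y)).ne'
  field_simp
end

section
/- Let 𝒴 be a finite nonempty set, let p_d and p_0 be probability distributions on 𝒴 with p_d(y) > 0 and p_0(y) > 0 for all y. Define recursively, for t ≥ 1, p̃_t(y) = p_d(y)·p_{t-1}(y)/(p_d(y)+p_{t-1}(y)), z_t = Σ_{y∈𝒴} p̃_t(y), and p_t(y) = p̃_t(y)/z_t. Then for every t > 1, z_t < 1. -/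
open Finset

/-- Lemma A.2 of the paper: with `p̃_t(y) = p_d(y)p_{t-1}(y)/(p_d(y)+p_{t-1}(y))`,
`z_t = ∑_y p̃_t(y)` and `p_t = p̃_t/z_t`, we have `z_t < 1` for every `t > 1`. -/
theorem gcn_lemma_A2 {Y : Type*} [Fintype Y] [Nonempty Y]
    (pd : Y → ℝ) (hpd_pos : ∀ y, 0 < pd y) (hpd_sum : ∑ y, pd y = 1)
    (p : ℕ → Y → ℝ) (ptil : ℕ → Y → ℝ) (z : ℕ → ℝ)
    (hp0_pos : ∀ y, 0 < p 0 y) (hp0_sum : ∑ y, p 0 y = 1)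
    (hptil : ∀ (t : ℕ) (y : Y), ptil (t + 1) y = pd y * p t y / (pd y + p t y))
    (hz : ∀ t : ℕ, z (t + 1) = ∑ y, ptil (t + 1) y)
    (hp : ∀ (t : ℕ) (y : Y), p (t + 1) y = ptil (t + 1) y / z (t + 1)) :
    ∀ t : ℕ, 1 < t → z t < 1 := by
  have hpos : ∀ t, ∀ y, 0 < p t y := by
    intro t
    induction t with
    | zero => exact hp0_pos
    | succ n ih =>
      have hzpos : 0 < z (n + 1) := by
        rw [hz]
        apply Finset.sum_pos
        · intro y _
          rw [hptil]
          exact div_pos (mul_pos (hpd_pos y) (ih y)) (add_pos (hpd_pos y) (ih y))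
        · exact Finset.univ_nonempty
      intro y
      rw [hp, hptil]
      exact div_pos (div_pos (mul_pos (hpd_pos y) (ih y))
        (add_pos (hpd_pos y) (ih y))) hzpos
  have hzpos : ∀ t, 0 < z (t + 1) := by
    intro t
    rw [hz]
    apply Finset.sum_pos
    · intro y _
      rw [hptil]
      exact div_pos (mul_pos (hpd_pos y) (hpos t y)) (add_pos (hpd_pos y) (hpos t y))
    · exact Finset.univ_nonempty
  have hsum : ∀ t, ∑ y, p (t + 1) y = 1 := by
    intro t
    have : ∑ y, p (t + 1) y = (∑ y, ptil (t + 1) y) / z (t + 1) := by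
      rw [Finset.sum_div]
      exact Finset.sum_congr rfl fun y _ => hp t y
    rw [this, ← hz, div_self (hzpos t).ne']
  intro t ht
  obtain ⟨s, rfl⟩ : ∃ s, t = s + 2 := ⟨t - 2, by omega⟩
  have hlt : ∀ y : Y, ptil (s + 2) y < p (s + 1) y := by
    intro y
    rw [hptil]
    have h1 := hpd_pos y
    have h2 := hpos (s + 1) y
    rw [div_lt_iff₀ (add_pos h1 h2)]
    nlinarith
  calc z (s + 2) = ∑ y, ptil (s + 2) y := hz (s + 1)
    _ < ∑ y, p (s + 1) y :=
        Finset.sum_lt_sum_of_nonempty Finset.univ_nonempty fun y _ => hlt y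
    _ = 1 := hsum s
end

section
/- Let 𝒴 be a finite nonempty set, let p_d and p_0 be probability distributions on 𝒴 with p_d(y) > 0 and p_0(y) > 0 for all y. Define recursively, for t ≥ 1, p̃_t(y) = p_d(y)·p_{t-1}(y)/(p_d(y)+p_{t-1}(y)), z_t = Σ_{y∈𝒴} p̃_t(y), p_t(y) = p̃_t(y)/z_t, and define ẑ_0(y) = p_d(y)/p_0(y) and ẑ_t(y) = z_t·(ẑ_{t-1}(y) + 1) for t ≥ 1. Then for every t ≥ 1, z_{t+1} = E_{y∼p_t}[ ẑ_t(y) / (ẑ_t(y) + 1) ] = Σ_{y∈𝒴} p_t(y) · ẑ_t(y)/(ẑ_t(y)+1). -/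
open Finset

/-- The key identity in the proof of Lemma A.2 of the paper: for every `t ≥ 1`,
`z_{t+1} = E_{y∼p_t}[ ẑ_t(y)/(ẑ_t(y)+1) ] = ∑_y p_t(y)·ẑ_t(y)/(ẑ_t(y)+1)`. -/
theorem gcn_z_expectation {Y : Type*} [Fintype Y] [Nonempty Y]
    (pd : Y → ℝ) (hpd_pos : ∀ y, 0 < pd y) (hpd_sum : ∑ y, pd y = 1)
    (p : ℕ → Y → ℝ) (ptil : ℕ → Y → ℝ) (z : ℕ → ℝ) (zh : ℕ → Y → ℝ)
    (hp0_pos : ∀ y, 0 < p 0 y) (hp0_sum : ∑ y, p 0 y = 1)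
    (hptil : ∀ (t : ℕ) (y : Y), ptil (t + 1) y = pd y * p t y / (pd y + p t y))
    (hz : ∀ t : ℕ, z (t + 1) = ∑ y, ptil (t + 1) y)
    (hp : ∀ (t : ℕ) (y : Y), p (t + 1) y = ptil (t + 1) y / z (t + 1))
    (hzh0 : ∀ y, zh 0 y = pd y / p 0 y)
    (hzh : ∀ (t : ℕ) (y : Y), zh (t + 1) y = z (t + 1) * (zh t y + 1)) :
    ∀ t : ℕ, 1 ≤ t → z (t + 1) = ∑ y, p t y * (zh t y / (zh t y + 1)) := by
  have key : ∀ t : ℕ, (∀ y, 0 < p t y) ∧ (∀ y, zh t y = pd y / p t y) := by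
    intro t
    induction t with
    | zero => exact ⟨hp0_pos, hzh0⟩
    | succ t ih =>
      obtain ⟨hpos, hval⟩ := ih
      have hptil_pos : ∀ y, 0 < ptil (t + 1) y := by
        intro y
        rw [hptil]
        exact div_pos (mul_pos (hpd_pos y) (hpos y)) (add_pos (hpd_pos y) (hpos y))
      have hz_pos : 0 < z (t + 1) := by
        rw [hz]
        exact Finset.sum_pos (fun y _ => hptil_pos y) Finset.univ_nonempty
      have hp_pos : ∀ y, 0 < p (t + 1) y := by
        intro y
        rw [hp]
        exact div_pos (hptil_pos y) hz_pos
      refine ⟨hp_pos, fun y => ?_⟩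
      rw [hzh, hval y, hp, hptil]
      have h1 := (hpd_pos y).ne'
      have h2 := (hpos y).ne'
      have h3 := (add_pos (hpd_pos y) (hpos y)).ne'
      have h4 := hz_pos.ne'
      field_simp
  intro t _
  rw [hz]
  apply Finset.sum_congr rfl
  intro y _
  obtain ⟨hpos, hval⟩ := key t
  rw [hptil, hval y]
  have h1 := (hpd_pos y).ne'
  have h2 := (hpos y).ne'
  have h3 := (add_pos (hpd_pos y) (hpos y)).ne'
  have hne : pd y / p t y + 1 ≠ 0 := by
    have := hpd_pos y; have := hpos y; positivity
  field_simp
end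

section
/- Let 𝒴 be a finite nonempty set, p_d a probability distribution on 𝒴, p a probability distribution on 𝒴, and suppose p_d(y) + p(y) > 0 for all y ∈ 𝒴. Define D*(y) = p_d(y)/(p_d(y)+p(y)). Then D* maximizes the functional V(D) = Σ_y p_d(y)·log D(y) + Σ_y p(y)·log(1 − D(y)) over all functions D : 𝒴 → [0,1]; that is, for every D : 𝒴 → [0,1], V(D) ≤ V(D*), with the conventions 0·log 0 = 0 and p·log 0 = −∞ for p > 0. -/
/-!
Both sums of `V` run over the same `y`, so `V(D)` splits into the pointwise terms
`p_d(y)·log D(y) + p(y)·log(1 − D(y))`, and it suffices to maximise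
`t ↦ a·log t + b·log(1 − t)` on `[0, 1]`. If `a` or `b` vanishes, `D*` makes the remaining
term `0`, its largest possible value; at an endpoint with both weights positive the term is `−∞`.
Otherwise this is the two-point Gibbs inequality, obtained from `log x ≤ x − 1` applied to
`t / D*` and `(1 − t) / (1 − D*)`.
-/

open Finset

/-- One term `w·log d` of the discriminator objective, valued in `EReal`, with
the conventions `0·log 0 = 0` and `w·log 0 = −∞` for `w > 0`. -/
noncomputable def ganLogTerm (w d : ℝ) : EReal :=
  if w = 0 then 0 else if d = 0 then ⊥ else ((w * Real.log d : ℝ) : EReal)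

/-- The GAN discriminator objective
`V(D) = ∑_y p_d(y)·log D(y) + ∑_y p(y)·log(1 − D(y))`, valued in `EReal`. -/
noncomputable def ganObjective {Y : Type*} [Fintype Y] (pd p D : Y → ℝ) : EReal :=
  (∑ y, ganLogTerm (pd y) (D y)) + (∑ y, ganLogTerm (p y) (1 - D y))

open Real

lemma mul_log_le_mul_log_add {a d q : ℝ} (ha : 0 ≤ a) (hd : 0 < d) (hq : 0 < q) :
    a * log d ≤ a * log q + a * (d / q - 1) := by
  have h : log d - log q ≤ d / q - 1 := by
    rw [← log_div hd.ne' hq.ne']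
    exact log_le_sub_one_of_pos (div_pos hd hq)
  nlinarith [mul_le_mul_of_nonneg_left h ha]

lemma mul_log_add_mul_log_one_sub_le {a b t : ℝ} (ha : 0 < a) (hb : 0 < b)
    (ht₀ : 0 < t) (ht₁ : t < 1) :
    a * log t + b * log (1 - t) ≤ a * log (a / (a + b)) + b * log (b / (a + b)) := by
  have hab : 0 < a + b := add_pos ha hb
  have h₁ := mul_log_le_mul_log_add ha.le ht₀ (div_pos ha hab)
  have h₂ := mul_log_le_mul_log_add hb.le (sub_pos.2 ht₁) (div_pos hb hab)
  have hcancel : a * (t / (a / (a + b)) - 1) + b * ((1 - t) / (b / (a + b)) - 1) = 0 := by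
    field_simp
    ring
  linarith

lemma ganLogTerm_zero_left (d : ℝ) : ganLogTerm 0 d = 0 := if_pos rfl

lemma ganLogTerm_one (w : ℝ) : ganLogTerm w 1 = 0 := by
  simp [ganLogTerm]

lemma ganLogTerm_zero_right {w : ℝ} (hw : w ≠ 0) : ganLogTerm w 0 = ⊥ := by
  simp [ganLogTerm, hw]

lemma ganLogTerm_of_ne_zero {w d : ℝ} (hw : w ≠ 0) (hd : d ≠ 0) :
    ganLogTerm w d = ((w * log d : ℝ) : EReal) := by
  simp [ganLogTerm, hw, hd]

lemma ganLogTerm_nonpos {w d : ℝ} (hw : 0 ≤ w) (hd : d ∈ Set.Icc (0 : ℝ) 1) :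
    ganLogTerm w d ≤ 0 := by
  unfold ganLogTerm
  split_ifs
  · exact le_rfl
  · exact bot_le
  · exact EReal.coe_nonpos.2 (mul_nonpos_of_nonneg_of_nonpos hw (log_nonpos hd.1 hd.2))

lemma ganLogTerm_add_le_div {a b t : ℝ} (ha : 0 ≤ a) (hb : 0 ≤ b) (hab : 0 < a + b)
    (ht : t ∈ Set.Icc (0 : ℝ) 1) :
    ganLogTerm a t + ganLogTerm b (1 - t) ≤
      ganLogTerm a (a / (a + b)) + ganLogTerm b (1 - a / (a + b)) := by
  have ht' : 1 - t ∈ Set.Icc (0 : ℝ) 1 := ⟨by linarith [ht.2], by linarith [ht.1]⟩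
  rcases ha.eq_or_lt with rfl | ha
  · simp only [ganLogTerm_zero_left, zero_div, sub_zero, ganLogTerm_one, zero_add]
    exact ganLogTerm_nonpos hb ht'
  rcases hb.eq_or_lt with rfl | hb
  · simp only [ganLogTerm_zero_left, add_zero, div_self ha.ne', ganLogTerm_one]
    exact ganLogTerm_nonpos ha.le ht
  rcases ht.1.eq_or_lt with rfl | ht₀
  · simp [ganLogTerm_zero_right ha.ne']
  rcases ht.2.eq_or_lt with rfl | ht₁
  · simp [ganLogTerm_zero_right hb.ne']
  have hsub : 1 - a / (a + b) = b / (a + b) := by field_simp; ring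
  rw [hsub, ganLogTerm_of_ne_zero ha.ne' ht₀.ne', ganLogTerm_of_ne_zero hb.ne' (by linarith),
    ganLogTerm_of_ne_zero ha.ne' (div_pos ha hab).ne',
    ganLogTerm_of_ne_zero hb.ne' (div_pos hb hab).ne', ← EReal.coe_add, ← EReal.coe_add,
    EReal.coe_le_coe_iff]
  exact mul_log_add_mul_log_one_sub_le ha hb ht₀ ht₁

theorem gcn_optimal_discriminator_general {Y : Type*} [Fintype Y]
    (pd p : Y → ℝ)
    (hpd_nonneg : ∀ y, 0 ≤ pd y)
    (hp_nonneg : ∀ y, 0 ≤ p y)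
    (hpos : ∀ y, 0 < pd y + p y) :
    ∀ D : Y → ℝ, (∀ y, D y ∈ Set.Icc (0 : ℝ) 1) →
      ganObjective pd p D ≤ ganObjective pd p (fun y => pd y / (pd y + p y)) := by
  intro D hD
  simp only [ganObjective, ← sum_add_distrib]
  exact sum_le_sum fun y _ => ganLogTerm_add_le_div (hpd_nonneg y) (hp_nonneg y) (hpos y) (hD y)

/-- The optimal-discriminator property (line 3 of Algorithm 1 of the paper):
`D*(y) = p_d(y)/(p_d(y)+p(y))` maximizes
`V(D) = ∑_y p_d(y)·log D(y) + ∑_y p(y)·log(1 − D(y))` over all `D : 𝒴 → [0,1]`. -/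
theorem gcn_optimal_discriminator {Y : Type*} [Fintype Y] [Nonempty Y]
    (pd p : Y → ℝ)
    (hpd_nonneg : ∀ y, 0 ≤ pd y) (hpd_sum : ∑ y, pd y = 1)
    (hp_nonneg : ∀ y, 0 ≤ p y) (hp_sum : ∑ y, p y = 1)
    (hpos : ∀ y, 0 < pd y + p y) :
    ∀ D : Y → ℝ, (∀ y, D y ∈ Set.Icc (0 : ℝ) 1) →
      ganObjective pd p D ≤ ganObjective pd p (fun y => pd y / (pd y + p y)) :=
  gcn_optimal_discriminator_general pd p hpd_nonneg hp_nonneg hpos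
end
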